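/- Let A₀, A₁, h₀, h₁ be real polynomials in one variable and g₀, g₁ real polynomials in two variables. Let I ⊆ ℝ be an open interval containing 0 on which A₁(x) ≠ 0 and h₁(x) ≠ 0; set A(x) = A₀(x)/A₁(x), h(x) = h₀(x)/h₁(x), and Φ(x) = exp(−∫₀ˣ A(s) ds) · ∫₀ˣ exp(∫₀ˢ A(r) dr) h(s) ds. Define Pₗ(x,y) = A₁(x)·h₁(x)·(g₁·∂g₀/∂y − g₀·∂g₁/∂y)(x,y) and Qₗ(x,y) = A₁(x)·h₀(x)·g₁² − A₀(x)·h₁(x)·g₀·g₁ − A₁(x)·h₁(x)·(g₁·∂g₀/∂x − g₀·∂g₁/∂x). Let C ∈ ℝ, C ≠ 0, and set w(x) = C·exp(−∫₀ˣ A(s) ds). Define f(x,y) = g₁(x,y)·w(x) − g₀(x,y) + g₁(x,y)·Φ(x). Then for all x ∈ I and y ∈ ℝ, Pₗ·∂f/∂x + Qₗ·∂f/∂y = kₗ·f at (x,y), where kₗ(x,y) = −A₀(x)·h₁(x)·g₁·∂g₀/∂y + A₁(x)·h₀(x)·g₁·∂g₁/∂y + A₁(x)·h₁(x)·(∂g₀/∂y·∂g₁/∂x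 − ∂g₁/∂y·∂g₀/∂x). -/

import Mathlib

/-- Evaluation of a polynomial in two variables at `(x, y)`. -/
noncomputable def ev2 (p : MvPolynomial (Fin 2) ℝ) (x y : ℝ) : ℝ :=
  MvPolynomial.eval ![x, y] p

/-- Partial derivative with respect to the first variable. -/
noncomputable def pdX (p : MvPolynomial (Fin 2) ℝ) : MvPolynomial (Fin 2) ℝ :=
  MvPolynomial.pderiv (0 : Fin 2) p

/-- Partial derivative with respect to the second variable. -/
noncomputable def pdY (p : MvPolynomial (Fin 2) ℝ) : MvPolynomial (Fin 2) ℝ :=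
  MvPolynomial.pderiv (1 : Fin 2) p


/-- The rational function `A(x) = A₀(x)/A₁(x)`. -/
noncomputable def Afun (A₀ A₁ : Polynomial ℝ) (x : ℝ) : ℝ := A₀.eval x / A₁.eval x

/-- The rational function `h(x) = h₀(x)/h₁(x)`. -/
noncomputable def hfun (h₀ h₁ : Polynomial ℝ) (x : ℝ) : ℝ := h₀.eval x / h₁.eval x

/-- `Φ(x) = exp(−∫₀ˣ A) ∫₀ˣ exp(∫₀ˢ A) h(s) ds`. -/
noncomputable def Phi (A₀ A₁ h₀ h₁ : Polynomial ℝ) (x : ℝ) : ℝ :=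
  Real.exp (-(∫ s in (0:ℝ)..x, Afun A₀ A₁ s)) *
    ∫ s in (0:ℝ)..x, Real.exp (∫ r in (0:ℝ)..s, Afun A₀ A₁ r) * hfun h₀ h₁ s

/-- `Pₗ(x,y) = A₁ h₁ (g₁ ∂g₀/∂y − g₀ ∂g₁/∂y)`. -/
noncomputable def Pl (A₁ h₁ : Polynomial ℝ) (g₀ g₁ : MvPolynomial (Fin 2) ℝ) (x y : ℝ) : ℝ :=
  A₁.eval x * h₁.eval x * (ev2 g₁ x y * ev2 (pdY g₀) x y - ev2 g₀ x y * ev2 (pdY g₁) x y)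

/-- `Qₗ(x,y) = A₁ h₀ g₁² − A₀ h₁ g₀ g₁ − A₁ h₁ (g₁ ∂g₀/∂x − g₀ ∂g₁/∂x)`. -/
noncomputable def Ql (A₀ A₁ h₀ h₁ : Polynomial ℝ) (g₀ g₁ : MvPolynomial (Fin 2) ℝ)
    (x y : ℝ) : ℝ :=
  A₁.eval x * h₀.eval x * (ev2 g₁ x y) ^ 2
    - A₀.eval x * h₁.eval x * ev2 g₀ x y * ev2 g₁ x y
    - A₁.eval x * h₁.eval x * (ev2 g₁ x y * ev2 (pdX g₀) x y - ev2 g₀ x y * ev2 (pdX g₁) x y)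

/-- The cofactor `kₗ(x,y)` of Theorem 8 of the paper. -/
noncomputable def klco (A₀ A₁ h₀ h₁ : Polynomial ℝ) (g₀ g₁ : MvPolynomial (Fin 2) ℝ)
    (x y : ℝ) : ℝ :=
  -(A₀.eval x) * h₁.eval x * ev2 g₁ x y * ev2 (pdY g₀) x y
    + A₁.eval x * h₀.eval x * ev2 g₁ x y * ev2 (pdY g₁) x y
    + A₁.eval x * h₁.eval x
        * (ev2 (pdY g₀) x y * ev2 (pdX g₁) x y - ev2 (pdY g₁) x y * ev2 (pdX g₀) x y)

/-!
The function `u = w + Φ` is the variation-of-constants solution of `u' + A u = h` on `I`, and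
`f = g₁ u − g₀`. Hence `∂f/∂x = (∂g₁/∂x) u + g₁ (h − A u) − ∂g₀/∂x` and
`∂f/∂y = (∂g₁/∂y) u − ∂g₀/∂y`; once `A = A₀/A₁` and `h = h₀/h₁` are substituted, the invariance
relation is a polynomial identity in `u` at each point.
-/

open MvPolynomial in
theorem MvPolynomial.hasDerivAt_eval_update {σ : Type*} [DecidableEq σ]
    (p : MvPolynomial σ ℝ) (v : σ → ℝ) (i : σ) (t : ℝ) :
    HasDerivAt (fun s => eval (Function.update v i s) p)
      (eval (Function.update v i t) (pderiv i p)) t := by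
  induction p using MvPolynomial.induction_on with
  | C a => simpa using hasDerivAt_const t a
  | add p q hp hq => simpa only [map_add] using hp.fun_add hq
  | mul_X p j hp =>
    simp only [eval_mul, eval_X, Derivation.leibniz, pderiv_X, smul_eq_mul, map_add]
    rcases eq_or_ne j i with rfl | hji
    · simp only [Function.update_self, Pi.single_eq_same, map_one]
      exact (hp.fun_mul (hasDerivAt_id' t)).congr_deriv (by ring)
    · simpa [Function.update_of_ne hji, Pi.single_apply, hji, mul_comm] using hp.mul_const (v j)

theorem hasDerivAt_ev2_fst (p : MvPolynomial (Fin 2) ℝ) (x y : ℝ) :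
    HasDerivAt (fun t => ev2 p t y) (ev2 (pdX p) x y) x := by
  have hupd : ∀ t, Function.update ![x, y] 0 t = ![t, y] := fun t => by
    ext j; fin_cases j <;> rfl
  simpa [ev2, pdX, hupd] using MvPolynomial.hasDerivAt_eval_update p ![x, y] 0 x

theorem hasDerivAt_ev2_snd (p : MvPolynomial (Fin 2) ℝ) (x y : ℝ) :
    HasDerivAt (fun t => ev2 p x t) (ev2 (pdY p) x y) y := by
  have hupd : ∀ t, Function.update ![x, y] 1 t = ![x, t] := fun t => by
    ext j; fin_cases j <;> rfl
  simpa [ev2, pdY, hupd] using MvPolynomial.hasDerivAt_eval_update p ![x, y] 1 y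

theorem hasDerivAt_integral_of_continuousOn {I : Set ℝ} (hIopen : IsOpen I)
    (hIconn : I.OrdConnected) (h0I : (0 : ℝ) ∈ I) {a : ℝ → ℝ} (ha : ContinuousOn a I) {x : ℝ}
    (hx : x ∈ I) : HasDerivAt (fun t => ∫ s in (0 : ℝ)..t, a s) (a x) x :=
  intervalIntegral.integral_hasDerivAt_right
    ((ha.mono (hIconn.uIcc_subset h0I hx)).intervalIntegrable)
    ⟨I, hIopen.mem_nhds hx, ha.aestronglyMeasurable hIopen.measurableSet⟩
    (ha.continuousAt (hIopen.mem_nhds hx))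

noncomputable def linearODESolution (a b : ℝ → ℝ) (C t : ℝ) : ℝ :=
  Real.exp (-∫ s in (0 : ℝ)..t, a s) *
    (C + ∫ s in (0 : ℝ)..t, Real.exp (∫ r in (0 : ℝ)..s, a r) * b s)

theorem hasDerivAt_linearODESolution {I : Set ℝ} (hIopen : IsOpen I) (hIconn : I.OrdConnected)
    (h0I : (0 : ℝ) ∈ I) {a b : ℝ → ℝ} (ha : ContinuousOn a I) (hb : ContinuousOn b I) (C : ℝ)
    {x : ℝ} (hx : x ∈ I) :
    HasDerivAt (linearODESolution a b C) (b x - a x * linearODESolution a b C x) x := by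
  have hF : ∀ t ∈ I, HasDerivAt (fun t => ∫ s in (0 : ℝ)..t, a s) (a t) t := fun t ht =>
    hasDerivAt_integral_of_continuousOn hIopen hIconn h0I ha ht
  have hG := hasDerivAt_integral_of_continuousOn hIopen hIconn h0I
    ((ContinuousOn.rexp fun t ht => (hF t ht).continuousAt.continuousWithinAt).fun_mul hb) hx
  refine (((hF x hx).fun_neg.exp).fun_mul ((hasDerivAt_const x C).fun_add hG)).congr_deriv ?_
  rw [linearODESolution, Real.exp_neg]
  field_simp
  ring

theorem Pl_mul_add_Ql_mul_eq_klco_mul (A₀ A₁ h₀ h₁ : Polynomial ℝ)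
    (g₀ g₁ : MvPolynomial (Fin 2) ℝ) {x : ℝ} (y u : ℝ) (hA₁ : A₁.eval x ≠ 0)
    (hh₁ : h₁.eval x ≠ 0) :
    Pl A₁ h₁ g₀ g₁ x y * (ev2 (pdX g₁) x y * u
        + ev2 g₁ x y * (hfun h₀ h₁ x - Afun A₀ A₁ x * u) - ev2 (pdX g₀) x y)
      + Ql A₀ A₁ h₀ h₁ g₀ g₁ x y * (ev2 (pdY g₁) x y * u - ev2 (pdY g₀) x y)
      = klco A₀ A₁ h₀ h₁ g₀ g₁ x y * (ev2 g₁ x y * u - ev2 g₀ x y) := by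
  rw [Pl, Ql, klco, Afun, hfun]
  field_simp
  ring

theorem stmt_6_general
    (A₀ A₁ h₀ h₁ : Polynomial ℝ) (g₀ g₁ : MvPolynomial (Fin 2) ℝ)
    (I : Set ℝ) (hIopen : IsOpen I) (hIconn : I.OrdConnected) (h0I : (0:ℝ) ∈ I)
    (hA₁ : ∀ x ∈ I, A₁.eval x ≠ 0) (hh₁ : ∀ x ∈ I, h₁.eval x ≠ 0)
    (C : ℝ)
    (w : ℝ → ℝ)
    (hw : ∀ x, w x = C * Real.exp (-(∫ s in (0:ℝ)..x, Afun A₀ A₁ s)))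
    (f : ℝ → ℝ → ℝ)
    (hf : ∀ x y, f x y = ev2 g₁ x y * w x - ev2 g₀ x y + ev2 g₁ x y * Phi A₀ A₁ h₀ h₁ x) :
    ∀ x ∈ I, ∀ y : ℝ,
      Pl A₁ h₁ g₀ g₁ x y * deriv (fun t => f t y) x
        + Ql A₀ A₁ h₀ h₁ g₀ g₁ x y * deriv (fun t => f x t) y
      = klco A₀ A₁ h₀ h₁ g₀ g₁ x y * f x y := by
  intro x hx y
  have hA : ContinuousOn (Afun A₀ A₁) I :=
    A₀.continuous.continuousOn.div A₁.continuous.continuousOn hA₁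
  have hh : ContinuousOn (hfun h₀ h₁) I :=
    h₀.continuous.continuousOn.div h₁.continuous.continuousOn hh₁
  set u := linearODESolution (Afun A₀ A₁) (hfun h₀ h₁) C
  have hfu : ∀ x y, f x y = ev2 g₁ x y * u x - ev2 g₀ x y := fun x y => by
    simp only [hf, hw, Phi, u, linearODESolution]
    ring
  have hu := hasDerivAt_linearODESolution hIopen hIconn h0I hA hh C hx
  have hdx : HasDerivAt (fun t => f t y) (ev2 (pdX g₁) x y * u x
      + ev2 g₁ x y * (hfun h₀ h₁ x - Afun A₀ A₁ x * u x) - ev2 (pdX g₀) x y) x := by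
    simp only [hfu]
    exact ((hasDerivAt_ev2_fst g₁ x y).fun_mul hu).fun_sub (hasDerivAt_ev2_fst g₀ x y)
  have hdy : HasDerivAt (fun t => f x t) (ev2 (pdY g₁) x y * u x - ev2 (pdY g₀) x y) y := by
    simp only [hfu]
    exact ((hasDerivAt_ev2_snd g₁ x y).mul_const (u x)).fun_sub (hasDerivAt_ev2_snd g₀ x y)
  rw [hdx.deriv, hdy.deriv, hfu]
  exact Pl_mul_add_Ql_mul_eq_klco_mul A₀ A₁ h₀ h₁ g₀ g₁ y (u x) (hA₁ x hx) (hh₁ x hx)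

/-- Theorem 8 of the paper: for any nonzero solution `w(x) = C exp(−∫₀ˣ A)` of
`w' + A w = 0`, the function `f = g₁ w − g₀ + g₁ Φ` is an invariant of the system
`ẋ = Pₗ, ẏ = Qₗ` with the polynomial cofactor `kₗ`. -/
theorem stmt_6
    (A₀ A₁ h₀ h₁ : Polynomial ℝ) (g₀ g₁ : MvPolynomial (Fin 2) ℝ)
    (I : Set ℝ) (hIopen : IsOpen I) (hIconn : I.OrdConnected) (h0I : (0:ℝ) ∈ I)
    (hA₁ : ∀ x ∈ I, A₁.eval x ≠ 0) (hh₁ : ∀ x ∈ I, h₁.eval x ≠ 0)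
    (C : ℝ) (hC : C ≠ 0)
    (w : ℝ → ℝ)
    (hw : ∀ x, w x = C * Real.exp (-(∫ s in (0:ℝ)..x, Afun A₀ A₁ s)))
    (f : ℝ → ℝ → ℝ)
    (hf : ∀ x y, f x y = ev2 g₁ x y * w x - ev2 g₀ x y + ev2 g₁ x y * Phi A₀ A₁ h₀ h₁ x) :
    ∀ x ∈ I, ∀ y : ℝ,
      Pl A₁ h₁ g₀ g₁ x y * deriv (fun t => f t y) x
        + Ql A₀ A₁ h₀ h₁ g₀ g₁ x y * deriv (fun t => f x t) y
      = klco A₀ A₁ h₀ h₁ g₀ g₁ x y * f x y :=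
  stmt_6_general A₀ A₁ h₀ h₁ g₀ g₁ I hIopen hIconn h0I hA₁ hh₁ C w hw f hf
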